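/- Let H ∈ G_{n,i} for some i ∈ {1,…,n−1}, ◇ : 𝒦ⁿₙ → 𝒦ⁿ_H a monotonic map invariant on H-symmetric spherical cylinders, and suppose there exists a strictly increasing set function F : 𝒦ⁿₙ ∪ 𝒦ⁿ_H → [0,∞) with F(◇K) = F(K) for all convex bodies K. Then ◇ is projection invariant: (◇K)|H = K|H for all convex bodies K. -/

import Mathlib

open Set MeasureTheory Metric Pointwise

noncomputable section

/-- Euclidean space `ℝⁿ`. -/
abbrev Euc (n : ℕ) := EuclideanSpace ℝ (Fin n)

/-- The orthogonal projection onto `H`, as a self-map `x ↦ x|H` of the ambient space. -/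
def projS {n : ℕ} (H : Submodule ℝ (Euc n)) (x : Euc n) : Euc n :=
  (Submodule.orthogonalProjection H x : Euc n)

/-- The reflection with respect to the subspace `H` : `x ↦ 2(x|H) − x`. -/
def reflS {n : ℕ} (H : Submodule ℝ (Euc n)) (x : Euc n) : Euc n :=
  (2 : ℝ) • projS H x - x

/-- `A` is symmetric with respect to the subspace `H`. -/
def SymmWrt {n : ℕ} (H : Submodule ℝ (Euc n)) (A : Set (Euc n)) : Prop :=
  reflS H '' A = A

/-- The orthogonal projection `A|H` of a set `A` onto `H`. -/
def pimg {n : ℕ} (H : Submodule ℝ (Euc n)) (A : Set (Euc n)) : Set (Euc n) :=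
  projS H '' A

/-- The `H`-symmetric spherical cylinder `(r(B∩H)+x)+s(B∩H^⊥)`. -/
def cylSet {n : ℕ} (H : Submodule ℝ (Euc n)) (r s : ℝ) (x : Euc n) : Set (Euc n) :=
  (fun y => x + y) '' (r • (closedBall (0 : Euc n) 1 ∩ (H : Set (Euc n)))
    + s • (closedBall (0 : Euc n) 1 ∩ ((Hᗮ : Submodule ℝ (Euc n)) : Set (Euc n))))

/-- Convex bodies of `ℝⁿ`: compact convex sets with nonempty interior. -/
abbrev FullBody (n : ℕ) := {K : ConvexBody (Euc n) // (interior (K : Set (Euc n))).Nonempty}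

/-- `L` is a convex body in the subspace `H`: a compact convex subset of `H` with
nonempty interior relative to `H`. -/
def IsBodyIn {n : ℕ} (H : Submodule ℝ (Euc n)) (L : Set (Euc n)) : Prop :=
  L ⊆ (H : Set (Euc n)) ∧ IsCompact L ∧ Convex ℝ L ∧
    (interior (((↑) : H → Euc n) ⁻¹' L)).Nonempty

/-- Sets of special form: `L + s(B ∩ H^⊥)` with `L` a convex body in `H` and `s > 0`. -/
def SpecialForm {n : ℕ} (H : Submodule ℝ (Euc n)) (T : Set (Euc n)) : Prop :=
  ∃ (L : Set (Euc n)) (s : ℝ), IsBodyIn H L ∧ 0 < s ∧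
    T = L + s • (closedBall (0 : Euc n) 1 ∩ ((Hᗮ : Submodule ℝ (Euc n)) : Set (Euc n)))

/-- `K` belongs to `𝒦ⁿₙ ∪ 𝒦ⁿ_H`: it has nonempty interior or is `H`-symmetric. -/
def InDom {n : ℕ} (H : Submodule ℝ (Euc n)) (K : ConvexBody (Euc n)) : Prop :=
  (interior (K : Set (Euc n))).Nonempty ∨ SymmWrt H (K : Set (Euc n))

/-!
For `◇K|H ⊆ K|H`: a point `q ∈ H` outside the compact convex shadow `K|H` is separated from it
by a sphere of `H`, i.e. `K` lies in an `H`-symmetric spherical cylinder `C` whose shadow misses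
`q`; monotonicity and invariance give `◇K ⊆ ◇C = C`.

For `K|H ⊆ ◇K|H`: if `z ∈ K|H` is strictly separated from `◇K|H` by a hyperplane of `H`, cut from
`K` the cap `W` lying beyond that hyperplane. Then `◇W ⊆ ◇K` while `◇W|H ⊆ W|H` lies beyond the
hyperplane, so the nonempty set `◇W` has nowhere to be.
-/

open scoped InnerProductSpace

theorem IsCompact.exists_closedBall_superset_notMem {E : Type*} [NormedAddCommGroup E]
    [InnerProductSpace ℝ E] {K : Submodule ℝ E} {P : Set E} {q : E}
    (hP : IsCompact P) (hPc : Convex ℝ P) (hPne : P.Nonempty) (hPK : P ⊆ K) (hqK : q ∈ K)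
    (hq : q ∉ P) : ∃ c ∈ K, ∃ r > 0, P ⊆ closedBall c r ∧ q ∉ closedBall c r := by
  obtain ⟨p, hpP, hp⟩ := exists_norm_eq_iInf_of_complete_convex hPne hP.isComplete hPc q
  have hobtuse := (norm_eq_iInf_iff_real_inner_le_zero hPc hpP).1 hp
  obtain ⟨D, hD⟩ := hP.isBounded.subset_closedBall p
  have hqp : 0 < ‖q - p‖ := norm_pos_iff.2 (sub_ne_zero.2 (ne_of_mem_of_not_mem hpP hq).symm)
  obtain ⟨t, ht0, ht⟩ : ∃ t : ℝ, 0 < t ∧ t * ‖q - p‖ ^ 2 = D ^ 2 + ‖q - p‖ ^ 2 :=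
    ⟨D ^ 2 / ‖q - p‖ ^ 2 + 1, by positivity, by field_simp⟩
  -- the centre moves away from `q` along the ray from `q` through its nearest point `p`;
  -- since every `y ∈ P` sees `q - p` at an obtuse angle from `p`, `P` stays inside the ball
  refine ⟨p - t • (q - p), K.sub_mem (hPK hpP) (K.smul_mem _ (K.sub_mem hqK (hPK hpP))),
    √(D ^ 2 + t ^ 2 * ‖q - p‖ ^ 2), by positivity, fun y hy => ?_, ?_⟩
  · have hyD : ‖y - p‖ ≤ D := mem_closedBall_iff_norm.1 (hD hy)
    have hyp : t * ⟪q - p, y - p⟫_ℝ ≤ 0 := mul_nonpos_of_nonneg_of_nonpos ht0.le (hobtuse y hy)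
    rw [mem_closedBall_iff_norm, Real.le_sqrt (norm_nonneg _) (by positivity),
      show y - (p - t • (q - p)) = (y - p) + t • (q - p) by abel, norm_add_sq_real,
      real_inner_smul_right, norm_smul, Real.norm_eq_abs, abs_of_pos ht0, real_inner_comm]
    nlinarith [pow_le_pow_left₀ (norm_nonneg _) hyD 2]
  · rw [mem_closedBall_iff_norm, not_le,
      show q - (p - t • (q - p)) = (1 + t) • (q - p) by module, norm_smul, Real.norm_eq_abs,
      abs_of_pos (by linarith), Real.sqrt_lt' (by positivity)]
    nlinarith

theorem Convex.nonempty_interior_inter_of_isOpen {E : Type*} [AddCommGroup E] [Module ℝ E]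
    [TopologicalSpace E] [IsTopologicalAddGroup E] [ContinuousSMul ℝ E] {S U : Set E} (hS : Convex ℝ S)
    (hSi : (interior S).Nonempty) (hU : IsOpen U) (hSU : (S ∩ U).Nonempty) :
    (interior S ∩ U).Nonempty := by
  obtain ⟨k, hkS, hkU⟩ := hSU
  have hk : k ∈ closure (interior S) := by
    rw [hS.closure_interior_eq_closure_of_nonempty_interior hSi]
    exact subset_closure hkS
  obtain ⟨y, hyU, hyS⟩ := mem_closure_iff.1 hk U hU hkU
  exact ⟨y, hyS, hyU⟩

theorem smul_closedBall_one_inter_submodule {E : Type*} [NormedAddCommGroup E]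
    [NormedSpace ℝ E] (V : Submodule ℝ E) {r : ℝ} (hr : 0 < r) :
    r • (closedBall (0 : E) 1 ∩ (V : Set E)) = closedBall 0 r ∩ V := by
  rw [smul_set_inter₀ hr.ne', _root_.smul_closedBall _ _ zero_le_one, smul_zero,
    Real.norm_eq_abs, abs_of_pos hr, mul_one]
  congr 1
  ext x
  rw [mem_smul_set_iff_inv_smul_mem₀ hr.ne']
  exact V.smul_mem_iff (inv_ne_zero hr.ne')

section Euclidean

variable {n : ℕ} (H : Submodule ℝ (Euc n))

theorem projS_eq_starProjection : projS H = H.starProjection := rfl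

theorem pimg_subset (A : Set (Euc n)) : pimg H A ⊆ H := by
  rintro _ ⟨y, -, rfl⟩
  exact SetLike.coe_mem _

theorem isCompact_pimg (K : ConvexBody (Euc n)) : IsCompact (pimg H K) :=
  K.isCompact.image H.starProjection.continuous

theorem convex_pimg (K : ConvexBody (Euc n)) : Convex ℝ (pimg H K) :=
  K.convex.linear_image H.starProjection.toLinearMap

theorem mem_cylSet_iff {r s : ℝ} (hr : 0 < r) (hs : 0 < s) {x : Euc n} (hx : x ∈ H)
    (y : Euc n) : y ∈ cylSet H r s x ↔ ‖projS H y - x‖ ≤ r ∧ ‖y - projS H y‖ ≤ s := by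
  rw [cylSet, smul_closedBall_one_inter_submodule H hr, smul_closedBall_one_inter_submodule Hᗮ hs,
    projS_eq_starProjection]
  constructor
  · rintro ⟨_, ⟨a, ⟨ha, haH⟩, b, ⟨hb, hbH⟩, rfl⟩, rfl⟩
    have hproj : H.starProjection (x + (a + b)) = x + a := by
      rw [map_add, map_add, Submodule.starProjection_eq_self_iff.2 hx,
        Submodule.starProjection_eq_self_iff.2 haH,
        (Submodule.starProjection_apply_eq_zero_iff H).2 hbH, add_zero]
    rw [hproj]
    exact ⟨by simpa using ha, by simpa using hb⟩
  · rintro ⟨ha, hb⟩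
    refine ⟨y - x, ⟨H.starProjection y - x, ⟨mem_closedBall_zero_iff.2 ha,
      H.sub_mem (SetLike.coe_mem _) hx⟩, y - H.starProjection y,
      ⟨mem_closedBall_zero_iff.2 hb, Submodule.sub_starProjection_mem_orthogonal y⟩,
      by dsimp only; abel⟩, by dsimp only; abel⟩

theorem exists_fullBody_coe_eq_cylSet {r s : ℝ} (hr : 0 < r) (hs : 0 < s) {x : Euc n}
    (hx : x ∈ H) : ∃ C : FullBody n, (C.1 : Set (Euc n)) = cylSet H r s x := by
  have hcomp : IsCompact (cylSet H r s x) := by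
    rw [cylSet, smul_closedBall_one_inter_submodule H hr, smul_closedBall_one_inter_submodule Hᗮ hs]
    exact (((isCompact_closedBall _ _).inter_right H.closed_of_finiteDimensional).add
      ((isCompact_closedBall _ _).inter_right Hᗮ.closed_of_finiteDimensional)).image
      (continuous_const_add x)
  have hconv : Convex ℝ (cylSet H r s x) :=
    (((convex_closedBall _ _).inter H.convex).smul r).add
      (((convex_closedBall _ _).inter Hᗮ.convex).smul s) |>.translate x
  have hball : ball x (min r s) ⊆ cylSet H r s x := by
    intro y hy
    rw [mem_ball_iff_norm] at hy
    have hdecomp : projS H y - x = H.starProjection (y - x) := by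
      rw [map_sub, Submodule.starProjection_eq_self_iff.2 hx, projS_eq_starProjection]
    have hperp : y - projS H y = Hᗮ.starProjection (y - x) := by
      rw [Submodule.starProjection_orthogonal_val, map_sub,
        Submodule.starProjection_eq_self_iff.2 hx, projS_eq_starProjection]
      abel
    rw [mem_cylSet_iff H hr hs hx, hdecomp, hperp]
    exact ⟨(H.norm_starProjection_apply_le _).trans (hy.le.trans (min_le_left _ _)),
      (Hᗮ.norm_starProjection_apply_le _).trans (hy.le.trans (min_le_right _ _))⟩
  have hint : (interior (cylSet H r s x)).Nonempty :=
    ⟨x, interior_maximal hball isOpen_ball (mem_ball_self (lt_min hr hs))⟩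
  exact ⟨⟨⟨cylSet H r s x, hconv, hcomp, hint.mono interior_subset⟩, hint⟩, rfl⟩

theorem pimg_cylSet_subset {r s : ℝ} (hr : 0 < r) (hs : 0 < s) {x : Euc n} (hx : x ∈ H) :
    pimg H (cylSet H r s x) ⊆ closedBall x r := by
  rintro _ ⟨y, hy, rfl⟩
  exact mem_closedBall_iff_norm.2 ((mem_cylSet_iff H hr hs hx y).1 hy).1

theorem subset_cylSet {A : Set (Euc n)} {r s : ℝ} (hr : 0 < r) (hs : 0 < s) {x : Euc n}
    (hx : x ∈ H) (hAr : pimg H A ⊆ closedBall x r) (hAs : A ⊆ closedBall 0 s) :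
    A ⊆ cylSet H r s x := by
  intro y hy
  rw [mem_cylSet_iff H hr hs hx]
  refine ⟨mem_closedBall_iff_norm.1 (hAr ⟨y, hy, rfl⟩), ?_⟩
  rw [projS_eq_starProjection, ← Submodule.starProjection_orthogonal_val]
  exact (Hᗮ.norm_starProjection_apply_le y).trans (mem_closedBall_zero_iff.1 (hAs hy))

theorem exists_fullBody_subset_inter_halfSpace (K : FullBody n) (g : Euc n →L[ℝ] ℝ) {u : ℝ}
    (hK : ∃ k ∈ (K.1 : Set (Euc n)), u < g k) :
    ∃ W : FullBody n, (W.1 : Set (Euc n)) ⊆ K.1 ∧ (W.1 : Set (Euc n)) ⊆ {x | u ≤ g x} := by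
  set W := (K.1 : Set (Euc n)) ∩ {x | u ≤ g x}
  have hconv : Convex ℝ W := K.1.convex.inter (convex_halfSpace_ge g.toLinearMap.isLinear u)
  have hcomp : IsCompact W := K.1.isCompact.inter_right (isClosed_le continuous_const g.continuous)
  have hint : (interior W).Nonempty := by
    obtain ⟨k, hkK, hk⟩ := hK
    refine (K.1.convex.nonempty_interior_inter_of_isOpen K.2
      (isOpen_lt continuous_const g.continuous) ⟨k, hkK, hk⟩).mono ?_
    exact interior_maximal (inter_subset_inter interior_subset fun _ hx => le_of_lt (α := ℝ) hx)
      (isOpen_interior.inter (isOpen_lt continuous_const g.continuous))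
  exact ⟨⟨⟨W, hconv, hcomp, hint.mono interior_subset⟩, hint⟩, inter_subset_left,
    inter_subset_right⟩

variable {H}

theorem pimg_dia_subset (dia : FullBody n → ConvexBody (Euc n))
    (hmono : ∀ K L : FullBody n,
      (K.1 : Set (Euc n)) ⊆ (L.1 : Set (Euc n)) → (dia K : Set (Euc n)) ⊆ (dia L : Set (Euc n)))
    (hcyl : ∀ (C : FullBody n) (r s : ℝ) (x : Euc n), 0 < r → 0 < s → x ∈ H →
      (C.1 : Set (Euc n)) = cylSet H r s x → (dia C : Set (Euc n)) = (C.1 : Set (Euc n)))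
    (K : FullBody n) : pimg H (dia K) ⊆ pimg H K.1 := by
  intro q hq
  by_contra hqK
  obtain ⟨c, hcH, r, hr, hKr, hqr⟩ := (isCompact_pimg H K.1).exists_closedBall_superset_notMem
    (convex_pimg H K.1) (K.1.nonempty.image _) (pimg_subset H _) (pimg_subset H _ hq) hqK
  obtain ⟨s, hs, hKs⟩ := K.1.isCompact.isBounded.subset_closedBall_lt 0 0
  obtain ⟨C, hC⟩ := exists_fullBody_coe_eq_cylSet H hr hs hcH
  have hKC : (K.1 : Set (Euc n)) ⊆ C.1 := hC ▸ subset_cylSet H hr hs hcH hKr hKs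
  have hdiaK : (dia K : Set (Euc n)) ⊆ cylSet H r s c :=
    hC ▸ (hmono K C hKC).trans (hcyl C r s c hr hs hcH hC).subset
  exact hqr (pimg_cylSet_subset H hr hs hcH (image_mono hdiaK hq))

theorem pimg_subset_pimg_dia (dia : FullBody n → ConvexBody (Euc n))
    (hmono : ∀ K L : FullBody n,
      (K.1 : Set (Euc n)) ⊆ (L.1 : Set (Euc n)) → (dia K : Set (Euc n)) ⊆ (dia L : Set (Euc n)))
    (hshadow : ∀ K : FullBody n, pimg H (dia K) ⊆ pimg H K.1)
    (K : FullBody n) : pimg H K.1 ⊆ pimg H (dia K) := by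
  rintro _ ⟨k, hk, rfl⟩
  by_contra hkK
  obtain ⟨f, u, hfu, hufk⟩ := geometric_hahn_banach_closed_point (convex_pimg H (dia K))
    (isCompact_pimg H (dia K)).isClosed hkK
  obtain ⟨W, hWK, hWu⟩ :=
    exists_fullBody_subset_inter_halfSpace K (f.comp H.starProjection) ⟨k, hk, hufk⟩
  obtain ⟨y, hy⟩ := (dia W).nonempty
  obtain ⟨x, hxW, hxy⟩ := hshadow W ⟨y, hy, rfl⟩
  have hyu : f (projS H y) < u := hfu _ ⟨y, hmono W K hWK hy, rfl⟩
  have hxu : u ≤ f (projS H x) := hWu hxW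
  rw [hxy] at hxu
  linarith

end Euclidean

theorem stmt9_general {n : ℕ}
    (H : Submodule ℝ (Euc n))
    (dia : FullBody n → ConvexBody (Euc n))
    (hmono : ∀ K L : FullBody n,
      (K.1 : Set (Euc n)) ⊆ (L.1 : Set (Euc n)) → (dia K : Set (Euc n)) ⊆ (dia L : Set (Euc n)))
    (hcyl : ∀ (C : FullBody n) (r s : ℝ) (x : Euc n), 0 < r → 0 < s → x ∈ H →
      (C.1 : Set (Euc n)) = cylSet H r s x → (dia C : Set (Euc n)) = (C.1 : Set (Euc n))) :
    ∀ K : FullBody n, pimg H (dia K : Set (Euc n)) = pimg H (K.1 : Set (Euc n)) := fun K =>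
  (pimg_dia_subset dia hmono hcyl K).antisymm
    (pimg_subset_pimg_dia dia hmono (pimg_dia_subset dia hmono hcyl) K)

/-- Theorem 2, case of bodies: if `H ∈ G_{n,i}` with `1 ≤ i ≤ n−1`,
`◇ : 𝒦ⁿₙ → 𝒦ⁿ_H` is monotonic and invariant on `H`-symmetric spherical cylinders, and
there is a strictly increasing set function `F : 𝒦ⁿₙ ∪ 𝒦ⁿ_H → [0,∞)` with `F(◇K) = F(K)`,
then `◇` is projection invariant. -/
theorem stmt9 {n i : ℕ} (hi1 : 1 ≤ i) (hin : i ≤ n - 1)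
    (H : Submodule ℝ (Euc n)) (hHr : Module.finrank ℝ H = i)
    (dia : FullBody n → ConvexBody (Euc n))
    (hcod : ∀ K, SymmWrt H (dia K : Set (Euc n)))
    (hmono : ∀ K L : FullBody n,
      (K.1 : Set (Euc n)) ⊆ (L.1 : Set (Euc n)) → (dia K : Set (Euc n)) ⊆ (dia L : Set (Euc n)))
    (hcyl : ∀ (C : FullBody n) (r s : ℝ) (x : Euc n), 0 < r → 0 < s → x ∈ H →
      (C.1 : Set (Euc n)) = cylSet H r s x → (dia C : Set (Euc n)) = (C.1 : Set (Euc n)))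
    (F : ConvexBody (Euc n) → ℝ)
    (hF0 : ∀ K, InDom H K → 0 ≤ F K)
    (hFmono : ∀ K L : ConvexBody (Euc n), InDom H K → InDom H L →
      (K : Set (Euc n)) ⊂ (L : Set (Euc n)) → F K < F L)
    (hFpres : ∀ K : FullBody n, F (dia K) = F K.1) :
    ∀ K : FullBody n, pimg H (dia K : Set (Euc n)) = pimg H (K.1 : Set (Euc n)) :=
  stmt9_general H dia hmono hcyl
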